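/- Let G_C be a C-DAG over clusters C. Define the 'maximal compatible ADMG' G* as follows: for each cluster C_i fix an arbitrary linear order on its members; for every edge C_i → C_j in G_C put a directed edge from every member of C_i to every member of C_j; for every bidirected edge C_i ↔ C_j put a bidirected edge between every member of C_i and every member of C_j; inside each cluster put a directed edge and a bidirected edge between each pair of consecutive vertices in the linear order. Then G* is acyclic and its quotient by the partition is exactly G_C; moreover, for every path p in G_C there is a path p' in G* visiting exactly one vertex in each cluster of p, with the same edge types and orientations, so every d-connection in G_C given a set of clusters Z corresponds to a d-connection in G* given ∪Z. -/
import Mathlib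


/-- An acyclic directed mixed graph skeleton: a directed edge relation
together with a symmetric bidirected edge relation. -/
structure MixedGraph (V : Type) where
  dir : V → V → Prop
  bi : V → V → Prop
  bi_symm : ∀ a b, bi a b → bi b a

namespace MixedGraph

variable {V : Type} {I : Type}

/-- Adjacency: a directed edge in either orientation or a bidirected edge. -/
def Adj (G : MixedGraph V) (a b : V) : Prop :=
  G.dir a b ∨ G.dir b a ∨ G.bi a b

/-- Acyclicity of the directed part. -/
def Acyclic (G : MixedGraph V) : Prop :=
  ∀ a, ¬ Relation.TransGen G.dir a a

/-- The quotient (cluster) graph of `G` by the partition given by the fibers of `π`. -/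
def quot (G : MixedGraph V) (π : V → I) : MixedGraph I where
  dir i j := i ≠ j ∧ ∃ a b, π a = i ∧ π b = j ∧ G.dir a b
  bi i j := i ≠ j ∧ ∃ a b, π a = i ∧ π b = j ∧ G.bi a b
  bi_symm := by
    rintro i j ⟨hne, a, b, ha, hb, h⟩
    exact ⟨hne.symm, b, a, hb, ha, G.bi_symm a b h⟩

/-- The mutilated graph: delete all edges with an arrowhead into `X`
and all directed edges out of `Z`. -/
def mutil (G : MixedGraph V) (X Z : Set V) : MixedGraph V where
  dir a b := G.dir a b ∧ b ∉ X ∧ a ∉ Z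
  bi a b := G.bi a b ∧ a ∉ X ∧ b ∉ X
  bi_symm := by
    rintro a b ⟨h, ha, hb⟩
    exact ⟨G.bi_symm a b h, hb, ha⟩

/-- Type of an edge as traversed along a walk. -/
inductive EType : Type
  | fwd   -- a → b
  | bwd   -- a ← b
  | bidir -- a ↔ b
deriving DecidableEq

/-- The step relation of a walk. -/
def step (G : MixedGraph V) (a : V) (e : EType) (b : V) : Prop :=
  match e with
  | .fwd => G.dir a b
  | .bwd => G.dir b a
  | .bidir => G.bi a b

/-- A walk starting at a vertex, given by a list of (edge type, next vertex). -/
def IsWalk (G : MixedGraph V) : V → List (EType × V) → Prop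
  | _, [] => True
  | a, (e, b) :: rest => G.step a e b ∧ IsWalk G b rest

/-- The final vertex of a walk. -/
def walkEnd : V → List (EType × V) → V
  | a, [] => a
  | _, (_, b) :: rest => walkEnd b rest

/-- `b` is a descendant of `a` (along directed edges, reflexively). -/
def Desc (G : MixedGraph V) : V → V → Prop :=
  Relation.ReflTransGen G.dir

/-- Whether an interior vertex between two consecutive steps is a collider:
an arrowhead on both sides. -/
def colliderAt (e₁ e₂ : EType) : Prop :=
  (e₁ = EType.fwd ∨ e₁ = EType.bidir) ∧ (e₂ = EType.bwd ∨ e₂ = EType.bidir)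

/-- A walk is active (d-connecting) given a conditioning set `S`:
every interior non-collider lies outside `S` and every interior collider
is in `S` or has a descendant in `S`. -/
def Active (G : MixedGraph V) (S : Set V) : List (EType × V) → Prop
  | [] => True
  | [_] => True
  | (e₁, b) :: (e₂, c) :: rest =>
      ((colliderAt e₁ e₂ ∧ ∃ d ∈ S, G.Desc b d) ∨ (¬ colliderAt e₁ e₂ ∧ b ∉ S))
      ∧ Active G S ((e₂, c) :: rest)

/-- The walk contains an (interior) collider belonging to `T`. -/
def HasColliderIn (G : MixedGraph V) (T : Set V) : List (EType × V) → Prop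
  | (e₁, b) :: (e₂, c) :: rest =>
      (colliderAt e₁ e₂ ∧ b ∈ T) ∨ HasColliderIn G T ((e₂, c) :: rest)
  | _ => False

/-- `X` and `Y` are d-connected given `S`: some active walk joins them. -/
def DConn (G : MixedGraph V) (S X Y : Set V) : Prop :=
  ∃ x ∈ X, ∃ w : List (EType × V),
    w ≠ [] ∧ G.IsWalk x w ∧ walkEnd x w ∈ Y ∧ G.Active S w

/-- d-separation: no active walk between `X` and `Y` given `S`. -/
def DSep (G : MixedGraph V) (S X Y : Set V) : Prop :=
  ¬ G.DConn S X Y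

end MixedGraph

open MixedGraph

/-- The "maximal compatible ADMG" over a C-DAG `H`, with cluster `i`
consisting of the vertices `(i, 0), ..., (i, n i - 1)`: all cross-cluster
edges allowed by `H` are present between all pairs of members, and inside a
cluster consecutive vertices are joined by a directed and a bidirected
edge. -/
def Gstar {I : Type} (H : MixedGraph I) (n : I → ℕ) :
    MixedGraph (Σ i : I, Fin (n i)) where
  dir x y := (x.1 ≠ y.1 ∧ H.dir x.1 y.1) ∨ (x.1 = y.1 ∧ x.2.val + 1 = y.2.val)
  bi x y := (x.1 ≠ y.1 ∧ H.bi x.1 y.1) ∨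
    (x.1 = y.1 ∧ (x.2.val + 1 = y.2.val ∨ y.2.val + 1 = x.2.val))
  bi_symm := by
    rintro a b (⟨h1, h2⟩ | ⟨h1, h2⟩)
    · exact Or.inl ⟨h1.symm, H.bi_symm _ _ h2⟩
    · exact Or.inr ⟨h1.symm, h2.symm⟩


section Helpers

variable {I : Type} {H : MixedGraph I} {n : I → ℕ}

lemma MixedGraph.ext' {V : Type} {G G' : MixedGraph V}
    (hd : G.dir = G'.dir) (hb : G.bi = G'.bi) : G = G' := by
  cases G; cases G'; cases hd; cases hb; rfl

/-- A vertex in cluster `i` with index 0. -/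
def lift0 (n : I → ℕ) (hn : ∀ i, 1 ≤ n i) (i : I) : Σ i : I, Fin (n i) :=
  ⟨i, ⟨0, hn i⟩⟩

lemma gstar_trans_proj {x y : Σ i : I, Fin (n i)}
    (h : Relation.TransGen (Gstar H n).dir x y) :
    (x.1 = y.1 ∧ x.2.val < y.2.val) ∨ Relation.TransGen H.dir x.1 y.1 := by
  induction h with
  | single h =>
    rcases h with ⟨_, hd⟩ | ⟨heq, hlt⟩
    · exact Or.inr (Relation.TransGen.single hd)
    · exact Or.inl ⟨heq, by omega⟩
  | tail _ h2 ih =>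
    rcases h2 with ⟨_, hd⟩ | ⟨heq, hlt⟩
    · rcases ih with ⟨he, _⟩ | ht
      · exact Or.inr (Relation.TransGen.single (he ▸ hd))
      · exact Or.inr (ht.tail hd)
    · rcases ih with ⟨he, hl⟩ | ht
      · exact Or.inl ⟨he.trans heq, by omega⟩
      · exact Or.inr (heq ▸ ht)

lemma gstar_acyclic (hacyc : H.Acyclic) : (Gstar H n).Acyclic := by
  intro a h
  rcases gstar_trans_proj h with ⟨_, hl⟩ | ht
  · omega
  · exact hacyc a.1 ht

lemma lift_step (hacyc : H.Acyclic) (hbi : ∀ i, ¬ H.bi i i)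
    (hn : ∀ i, 1 ≤ n i) {i j : I} {e : EType} (h : H.step i e j) :
    (Gstar H n).step (lift0 n hn i) e (lift0 n hn j) := by
  have hne : i ≠ j := by
    cases e with
    | fwd => rintro rfl; exact hacyc i (Relation.TransGen.single h)
    | bwd => rintro rfl; exact hacyc i (Relation.TransGen.single h)
    | bidir => rintro rfl; exact hbi i h
  cases e with
  | fwd => exact Or.inl ⟨hne, h⟩
  | bwd => exact Or.inl ⟨hne.symm, h⟩
  | bidir => exact Or.inl ⟨hne, h⟩

lemma lift_desc (hacyc : H.Acyclic) (hn : ∀ i, 1 ≤ n i) {i j : I}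
    (h : H.Desc i j) : (Gstar H n).Desc (lift0 n hn i) (lift0 n hn j) := by
  induction h with
  | refl => exact Relation.ReflTransGen.refl
  | tail _ h2 ih =>
    refine ih.tail (Or.inl ⟨?_, h2⟩)
    rintro rfl
    exact hacyc _ (Relation.TransGen.single h2)

lemma lift_walk (hacyc : H.Acyclic) (hbi : ∀ i, ¬ H.bi i i)
    (hn : ∀ i, 1 ≤ n i) : ∀ (w : List (EType × I)) (i : I), H.IsWalk i w →
    (Gstar H n).IsWalk (lift0 n hn i) (w.map fun p => (p.1, lift0 n hn p.2))
  | [], _, _ => trivial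
  | (e, b) :: rest, i, ⟨h1, h2⟩ =>
    ⟨lift_step hacyc hbi hn h1, lift_walk hacyc hbi hn rest b h2⟩

lemma lift_walkEnd (hn : ∀ i, 1 ≤ n i) :
    ∀ (w : List (EType × I)) (i : I),
    MixedGraph.walkEnd (lift0 n hn i) (w.map fun p => (p.1, lift0 n hn p.2))
      = lift0 n hn (MixedGraph.walkEnd i w)
  | [], _ => rfl
  | (e, b) :: rest, i => lift_walkEnd hn rest b

lemma lift_active (hacyc : H.Acyclic) (hn : ∀ i, 1 ≤ n i) (S : Set I) :
    ∀ (w : List (EType × I)), H.Active S w →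
    (Gstar H n).Active {v | v.1 ∈ S} (w.map fun p => (p.1, lift0 n hn p.2))
  | [], _ => trivial
  | [_], _ => trivial
  | (e₁, b) :: (e₂, c) :: rest, ⟨h1, h2⟩ => by
    refine ⟨?_, lift_active hacyc hn S ((e₂, c) :: rest) h2⟩
    rcases h1 with ⟨hc, d, hdS, hdesc⟩ | ⟨hnc, hbS⟩
    · exact Or.inl ⟨hc, lift0 n hn d, hdS, lift_desc hacyc hn hdesc⟩
    · exact Or.inr ⟨hnc, hbS⟩

end Helpers

/-- the maximal compatible ADMG `Gstar H n` of an acyclic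
C-DAG `H` (with nonempty clusters) is acyclic, its quotient is exactly `H`,
every walk of `H` lifts to a walk of `Gstar H n` visiting exactly one vertex
per cluster with the same edge types (and preserving activity), and hence
every d-connection in `H` given a set of clusters corresponds to a
d-connection in `Gstar H n` given the union of those clusters. -/
theorem stmt16 {I : Type} (H : MixedGraph I)
    (hacyc : H.Acyclic) (hbi_irrefl : ∀ i, ¬ H.bi i i)
    (n : I → ℕ) (hn : ∀ i, 1 ≤ n i) :
    (Gstar H n).Acyclic ∧
    (Gstar H n).quot (Sigma.fst) = H ∧
    (∀ (i : I) (w : List (EType × I)), H.IsWalk i w →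
      ∃ (a : Σ i : I, Fin (n i)) (w' : List (EType × (Σ i : I, Fin (n i)))),
        a.1 = i ∧ (Gstar H n).IsWalk a w' ∧
        w'.map (fun p => (p.1, p.2.1)) = w ∧
        ∀ S : Set I, H.Active S w →
          (Gstar H n).Active {v | v.1 ∈ S} w') ∧
    (∀ S X Y : Set I, ¬ H.DSep S X Y →
      ¬ (Gstar H n).DSep {v | v.1 ∈ S} {v | v.1 ∈ X} {v | v.1 ∈ Y}) := by
  have key : ∀ (i : I) (w : List (EType × I)), H.IsWalk i w →
      ∃ (a : Σ i : I, Fin (n i)) (w' : List (EType × (Σ i : I, Fin (n i)))),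
        a.1 = i ∧ (Gstar H n).IsWalk a w' ∧
        w'.map (fun p => (p.1, p.2.1)) = w ∧
        ∀ S : Set I, H.Active S w →
          (Gstar H n).Active {v | v.1 ∈ S} w' := by
    intro i w hw
    refine ⟨lift0 n hn i, w.map fun p => (p.1, lift0 n hn p.2), rfl,
      lift_walk hacyc hbi_irrefl hn w i hw, ?_, fun S hS => lift_active hacyc hn S w hS⟩
    rw [List.map_map]
    exact List.map_id w
  refine ⟨gstar_acyclic hacyc, ?_, key, ?_⟩
  · apply MixedGraph.ext'
    · funext i j
      apply propext
      constructor
      · rintro ⟨hne, a, b, rfl, rfl, ⟨_, hd⟩ | ⟨heq, _⟩⟩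
        · exact hd
        · exact absurd heq hne
      · intro h
        have hne : i ≠ j := by rintro rfl; exact hacyc i (Relation.TransGen.single h)
        exact ⟨hne, ⟨i, ⟨0, hn i⟩⟩, ⟨j, ⟨0, hn j⟩⟩, rfl, rfl, Or.inl ⟨hne, h⟩⟩
    · funext i j
      apply propext
      constructor
      · rintro ⟨hne, a, b, rfl, rfl, ⟨_, hd⟩ | ⟨heq, _⟩⟩
        · exact hd
        · exact absurd heq hne
      · intro h
        have hne : i ≠ j := by rintro rfl; exact hbi_irrefl i h
        exact ⟨hne, ⟨i, ⟨0, hn i⟩⟩, ⟨j, ⟨0, hn j⟩⟩, rfl, rfl, Or.inl ⟨hne, h⟩⟩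
  · intro S X Y h
    simp only [MixedGraph.DSep, not_not] at h ⊢
    obtain ⟨x, hx, w, hwne, hwalk, hend, hact⟩ := h
    refine ⟨lift0 n hn x, hx, w.map fun p => (p.1, lift0 n hn p.2),
      by simpa using hwne, lift_walk hacyc hbi_irrefl hn w x hwalk, ?_,
      lift_active hacyc hn S w hact⟩
    rw [lift_walkEnd hn]
    exact hend
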